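/- Let b be a prime, m ≥ 1, and let c_{i,j} ∈ {0,…,b−1} for 1 ≤ i ≤ j ≤ m with c_{i,i} ≢ 0 (mod b) for all i. Let P = {(n/b^m, ν(n)) : n = 0,1,…,b^m−1} be the associated NUT net. Then disp(P) ≤ (2b/b^m)(1 − b/(2b^m)); i.e., every axis-parallel box B ⊆ [0,1]² containing no point of P has area at most (2b/b^m)(1 − b/(2b^m)). -/

import Mathlib

/-!
Scale by `N = b ^ m`: the points become `(n, Y n) / N` with `Y n = N ν(n) ∈ ℕ`. Along the `b ^ j`
indices that share their top `m - j` digits, the triangular system with invertible diagonal makes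
the top `j` digits of `Y n` take every value while the lower ones stay fixed, so these indices hit
every window of `b ^ (m - j)` consecutive values. Hence an empty box covering `p` grid columns and
`L ≥ b ^ k` grid rows has `p ≤ 2 b ^ (m - k) - 2`; taking `b ^ k ≤ L < b ^ (k + 1)` gives
`(p + 1) (L + 1) ≤ 2 b ^ (m + 1) - b ^ 2`, which is the bound times `N ^ 2`.
-/

/-- The set of areas of axis-parallel half-open boxes `[x1,y1) x [x2,y2)` inside `[0,1]^2`
containing no point of `P`. -/
def emptyBoxAreas (P : Set (ℝ × ℝ)) : Set ℝ :=
  { A | ∃ x₁ y₁ x₂ y₂ : ℝ,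
      0 ≤ x₁ ∧ x₁ ≤ y₁ ∧ y₁ ≤ 1 ∧ 0 ≤ x₂ ∧ x₂ ≤ y₂ ∧ y₂ ≤ 1 ∧
      (∀ p ∈ P, p ∉ Set.Ico x₁ y₁ ×ˢ Set.Ico x₂ y₂) ∧
      A = (y₁ - x₁) * (y₂ - x₂) }

/-- The dispersion of a point set `P ⊆ [0,1]^2`: the supremum of areas of empty
axis-parallel boxes. -/
noncomputable def disp (P : Set (ℝ × ℝ)) : ℝ := sSup (emptyBoxAreas P)
/-- The `i`-th digit (1-based) of `n` in base `b`, with the convention that the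
`0`-th digit is `0`. -/
def nthDigit (b n i : ℕ) : ℕ := if i = 0 then 0 else n / b ^ (i - 1) % b
/-- The second-coordinate map `ν` of a NUT net with coefficient matrix `c`:
`ν(n) = Σ_{i=1}^m ((c_{i,i}e_i + c_{i,i+1}e_{i+1} + ⋯ + c_{i,m}e_m) mod b)/b^i`. -/
noncomputable def nutMap (b m : ℕ) (c : ℕ → ℕ → ℕ) (n : ℕ) : ℝ :=
  ∑ i ∈ Finset.Icc 1 m,
    (((∑ j ∈ Finset.Icc i m, c i j * nthDigit b n j) % b : ℕ) : ℝ) / (b : ℝ) ^ i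

open Finset

lemma nthDigit_add_mul_one {b e : ℕ} (q : ℕ) (he : e < b) : nthDigit b (e + b * q) 1 = e := by
  simp [nthDigit, Nat.mod_eq_of_lt he]

lemma nthDigit_add_mul_succ {b e j : ℕ} (q : ℕ) (he : e < b) (hj : j ≠ 0) :
    nthDigit b (e + b * q) (j + 1) = nthDigit b q j := by
  obtain ⟨j, rfl⟩ := Nat.exists_eq_succ_of_ne_zero hj
  have hdiv : (e + b * q) / b = q := by
    rw [Nat.add_mul_div_left _ _ (by omega), Nat.div_eq_of_lt he, zero_add]
  simp [nthDigit, pow_succ', ← Nat.div_div_eq_div_mul, hdiv]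

def nutNumerator (b m : ℕ) (c : ℕ → ℕ → ℕ) (n : ℕ) : ℕ :=
  ∑ i ∈ Icc 1 m, ((∑ j ∈ Icc i m, c i j * nthDigit b n j) % b) * b ^ (m - i)

lemma nutMap_eq_nutNumerator_div {b : ℕ} (hb : b ≠ 0) (m : ℕ) (c : ℕ → ℕ → ℕ) (n : ℕ) :
    nutMap b m c n = nutNumerator b m c n / (b : ℝ) ^ m := by
  rw [nutMap, nutNumerator, Nat.cast_sum, Finset.sum_div]
  refine Finset.sum_congr rfl fun i hi => ?_
  have hpow : (b : ℝ) ^ m = (b : ℝ) ^ (m - i) * (b : ℝ) ^ i := by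
    rw [← pow_add, Nat.sub_add_cancel (Finset.mem_Icc.mp hi).2]
  rw [hpow, Nat.cast_mul, Nat.cast_pow]
  field_simp

lemma nutNumerator_add_mul {b e : ℕ} (M : ℕ) (c : ℕ → ℕ → ℕ) (q : ℕ) (he : e < b) :
    nutNumerator b (M + 1) c (e + b * q) =
      ((c 1 1 * e + ∑ j ∈ Icc 1 M, c 1 (j + 1) * nthDigit b q j) % b) * b ^ M +
        nutNumerator b M (fun i j => c (i + 1) (j + 1)) q := by
  have hIcc : ∀ i, Icc (i + 1) (M + 1) = (Icc i M).map (addRightEmbedding 1) := fun i => by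
    rw [Finset.map_add_right_Icc]
  have hdigits : ∀ (f : ℕ → ℕ) (i : ℕ), i ≠ 0 →
      ∑ j ∈ Icc (i + 1) (M + 1), f j * nthDigit b (e + b * q) j =
        ∑ j ∈ Icc i M, f (j + 1) * nthDigit b q j := fun f i hi => by
    rw [hIcc, Finset.sum_map]
    refine Finset.sum_congr rfl fun j hj => ?_
    rw [addRightEmbedding_apply, nthDigit_add_mul_succ q he (by grind)]
  rw [nutNumerator, nutNumerator, ← Finset.insert_Icc_add_one_left_eq_Icc (by omega),
    Finset.sum_insert (by simp), ← Finset.insert_Icc_add_one_left_eq_Icc (by omega),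
    Finset.sum_insert (by simp), nthDigit_add_mul_one q he, hdigits _ 1 one_ne_zero, hIcc,
    Finset.sum_map]
  congr 1
  refine Finset.sum_congr rfl fun i hi => ?_
  rw [addRightEmbedding_apply, hdigits _ i (by grind), Nat.add_sub_add_right]

lemma nutNumerator_lt {b : ℕ} (hb : 0 < b) (m : ℕ) (c : ℕ → ℕ → ℕ) (n : ℕ) :
    nutNumerator b m c n < b ^ m := by
  induction m generalizing c n with
  | zero => simp [nutNumerator]
  | succ M ih =>
    rw [← Nat.mod_add_div n b, nutNumerator_add_mul M c _ (Nat.mod_lt n hb)]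
    have hlead : ∀ a, a % b * b ^ M + b ^ M ≤ b ^ (M + 1) := fun a => by
      rw [pow_succ', ← Nat.succ_mul]
      exact Nat.mul_le_mul_right _ (Nat.mod_lt a hb)
    exact (Nat.add_lt_add_left (ih _ (n / b)) _).trans_le (hlead _)

lemma exists_lt_add_mul_mod_eq {N a : ℕ} [NeZero N] (ha : a.Coprime N) (r : ℕ) {d : ℕ}
    (hd : d < N) : ∃ e < N, (r + a * e) % N = d := by
  obtain ⟨u, hu⟩ : ∃ u : (ZMod N)ˣ, (u : ZMod N) = a := ⟨_, ZMod.coe_unitOfCoprime a ha⟩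
  refine ⟨(((d : ZMod N) - r) * ↑u⁻¹).val, ZMod.val_lt _, ?_⟩
  have hcast : ((r + a * (((d : ZMod N) - r) * ↑u⁻¹).val : ℕ) : ZMod N) = d := by
    rw [Nat.cast_add, Nat.cast_mul, ZMod.natCast_zmod_val, ← hu, mul_left_comm, Units.mul_inv,
      mul_one, add_sub_cancel]
  rw [← ZMod.val_natCast, hcast, ZMod.val_natCast, Nat.mod_eq_of_lt hd]

lemma exists_nutNumerator_eq_add_mod_pow {b : ℕ} (hb : 0 < b) (m : ℕ) (c : ℕ → ℕ → ℕ)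
    (n β : ℕ) : ∃ u < b ^ m, nutNumerator b m c n = (β + u) % b ^ m := by
  have : NeZero (b ^ m) := ⟨by positivity⟩
  obtain ⟨u, hu, h⟩ := exists_lt_add_mul_mod_eq (Nat.coprime_one_left _) β
    (nutNumerator_lt hb m c n)
  exact ⟨u, hu, by simpa using h.symm⟩

/-- The window of values is cyclic so that it survives reduction modulo `b ^ (m - 1)`: the
induction peels off the lowest digit of `n`, which only affects the leading digit of the
numerator. -/
theorem exists_nutNumerator_eq_add_mod {b : ℕ} (hb : 1 < b) {m k : ℕ} (hk : k ≤ m)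
    {c : ℕ → ℕ → ℕ} (hc : ∀ i, 1 ≤ i → i ≤ m → (c i i).Coprime b) (β s : ℕ) {p : ℕ}
    (hp : 2 * b ^ (m - k) ≤ p + 1) :
    ∃ n, s ≤ n ∧ n < s + p ∧ ∃ u < b ^ k, nutNumerator b m c n = (β + u) % b ^ m := by
  have : NeZero b := ⟨by omega⟩
  induction m generalizing k c s p with
  | zero =>
    obtain rfl := Nat.le_zero.mp hk
    exact ⟨s, le_rfl, by simp at hp; omega, exists_nutNumerator_eq_add_mod_pow (by omega) 0 c s β⟩
  | succ M ih =>
    rcases hk.eq_or_lt with rfl | hk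
    · exact ⟨s, le_rfl, by simp at hp; omega, exists_nutNumerator_eq_add_mod_pow (by omega) _ c s β⟩
    -- `A ≤ q < B` iff all of `b * q, …, b * q + b - 1` lie in `[s, s + p)`
    set A := (s + b - 1) / b
    set B := (s + p) / b
    have hA : b * A + (s + b - 1) % b = s + b - 1 := Nat.div_add_mod _ b
    have hA' := Nat.mod_lt (s + b - 1) (by omega : 0 < b)
    have hB : b * B + (s + p) % b = s + p := Nat.div_add_mod _ b
    have hB' := Nat.mod_lt (s + p) (by omega : 0 < b)
    have hp' : 2 * b ^ (M - k) ≤ B - A + 1 := by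
      have hbp : b * (2 * b ^ (M - k)) ≤ p + 1 := by
        rwa [Nat.sub_add_comm (by omega), pow_succ', mul_left_comm] at hp
      have hlt : b * (2 * b ^ (M - k) + A) < b * (B + 2) := by rw [mul_add, mul_add]; omega
      have hAB := Nat.lt_of_mul_lt_mul_left hlt
      omega
    obtain ⟨q, hAq, hqB, u, hu, hq⟩ := ih (Nat.lt_succ_iff.mp hk)
      (c := fun i j => c (i + 1) (j + 1)) (fun i hi hiM => hc (i + 1) (by omega) (by omega)) A hp'
    set T := (β + u) % b ^ (M + 1)
    have hT : T / b ^ M < b := Nat.div_lt_of_lt_mul (pow_succ b M ▸ Nat.mod_lt _ (by positivity))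
    obtain ⟨e, he, hdigit⟩ := exists_lt_add_mul_mod_eq (hc 1 le_rfl (by omega))
      (∑ j ∈ Icc 1 M, c 1 (j + 1) * nthDigit b q j) hT
    refine ⟨e + b * q, ?_, ?_, u, hu, ?_⟩
    · have hbq := Nat.mul_le_mul_left b hAq
      omega
    · have hbq := Nat.mul_le_mul_left b (show q + 1 ≤ B by omega)
      rw [mul_add] at hbq
      omega
    · rw [nutNumerator_add_mul M c q he, add_comm (c 1 1 * e), hdigit, hq,
        ← Nat.mod_mod_of_dvd _ (pow_dvd_pow b M.le_succ), Nat.div_add_mod']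

lemma div_mem_Ico_of_ceil_le {x y N : ℝ} (hN : 0 < N) {n : ℕ} (h₁ : ⌈x * N⌉₊ ≤ n)
    (h₂ : n < ⌈y * N⌉₊) : (n : ℝ) / N ∈ Set.Ico x y :=
  ⟨(le_div_iff₀ hN).2 (Nat.ceil_le.1 h₁), (div_lt_iff₀ hN).2 (Nat.lt_ceil.1 h₂)⟩

lemma sub_mul_le_ceil_sub_ceil_add_one {x y N : ℝ} (hx : 0 ≤ x) (hN : 0 ≤ N) :
    (y - x) * N ≤ ((⌈y * N⌉₊ - ⌈x * N⌉₊ : ℕ) : ℝ) + 1 := by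
  have hy := Nat.le_ceil (y * N)
  have hx' := Nat.ceil_lt_add_one (mul_nonneg hx hN)
  have hsub := (Nat.cast_le (α := ℝ)).2 (le_tsub_add : ⌈y * N⌉₊ ≤ ⌈y * N⌉₊ - ⌈x * N⌉₊ + ⌈x * N⌉₊)
  push_cast at hsub
  linarith

lemma min_mul_min_add_sq_le {b m p L : ℕ} (hb : 2 ≤ b) (hm : 1 ≤ m)
    (hcols : ∀ k ≤ m, b ^ k ≤ L → p + 2 ≤ 2 * b ^ (m - k)) :
    min (p + 1) (b ^ m) * min (L + 1) (b ^ m) + b ^ 2 ≤ 2 * b ^ (m + 1) := by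
  have hbm : b ≤ b ^ m := le_self_pow (by omega) (by omega)
  rcases lt_or_ge L b with hLb | hbL
  · calc _ ≤ b ^ m * b + b ^ 2 := by gcongr <;> omega
      _ ≤ 2 * b ^ (m + 1) := by rw [pow_succ b m]; nlinarith [Nat.mul_le_mul_right b hbm]
  rcases le_or_gt (b ^ m) L with hL | hL
  · have hp : p = 0 := by simpa using hcols m le_rfl hL
    calc _ ≤ 1 * b ^ m + b ^ 2 := by gcongr <;> omega
      _ ≤ 2 * b ^ (m + 1) := by rw [pow_succ b m]; nlinarith [Nat.mul_le_mul_right b hbm]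
  set k := Nat.log b L
  have hkL : b ^ k ≤ L := Nat.pow_log_le_self b (by omega)
  have hLk : L < b ^ (k + 1) := Nat.lt_pow_succ_log_self hb L
  have hk : 1 ≤ k := Nat.le_log_of_pow_le hb (by simpa using hbL)
  have hkm : k < m := Nat.log_lt_of_lt_pow (by omega) hL
  have hp := hcols k hkm.le hkL
  calc _ ≤ (p + 1) * b ^ (k + 1) + b ^ (k + 1) := by
        gcongr
        · exact min_le_left _ _
        · exact (min_le_left _ _).trans hLk
        all_goals omega
    _ = (p + 2) * b ^ (k + 1) := by ring
    _ ≤ 2 * b ^ (m - k) * b ^ (k + 1) := by gcongr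
    _ = 2 * b ^ (m + 1) := by rw [mul_assoc, ← pow_add]; congr 2; omega

lemma sub_mul_pow_le_min {b m : ℕ} {x y : ℝ} (hx : 0 ≤ x) (hy : y ≤ 1) :
    (y - x) * (b : ℝ) ^ m ≤
      ((min (⌈y * (b : ℝ) ^ m⌉₊ - ⌈x * (b : ℝ) ^ m⌉₊ + 1) (b ^ m) : ℕ) : ℝ) := by
  rw [Nat.cast_min, le_min_iff, Nat.cast_add_one, Nat.cast_pow]
  exact ⟨sub_mul_le_ceil_sub_ceil_add_one hx (by positivity),
    mul_le_of_le_one_left (by positivity) (by linarith)⟩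

lemma mul_le_of_mul_pow_le {b m W H : ℕ} (hb : 0 < b) {w h : ℝ} (hh : 0 ≤ h)
    (hW : w * (b : ℝ) ^ m ≤ W) (hH : h * (b : ℝ) ^ m ≤ H) (hWH : W * H + b ^ 2 ≤ 2 * b ^ (m + 1)) :
    w * h ≤ 2 * (b : ℝ) / (b : ℝ) ^ m * (1 - (b : ℝ) / (2 * (b : ℝ) ^ m)) := by
  have hN : 0 < (b : ℝ) ^ m := by positivity
  have hWH' := (Nat.cast_le (α := ℝ)).2 hWH
  push_cast at hWH'
  have hbound : 2 * (b : ℝ) / (b : ℝ) ^ m * (1 - (b : ℝ) / (2 * (b : ℝ) ^ m)) =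
      (2 * (b : ℝ) ^ (m + 1) - (b : ℝ) ^ 2) / ((b : ℝ) ^ m) ^ 2 := by
    field_simp
    ring
  rw [hbound, le_div_iff₀ (by positivity)]
  calc w * h * ((b : ℝ) ^ m) ^ 2 = (w * (b : ℝ) ^ m) * (h * (b : ℝ) ^ m) := by ring
    _ ≤ W * H := mul_le_mul hW hH (by positivity) (by positivity)
    _ ≤ 2 * (b : ℝ) ^ (m + 1) - (b : ℝ) ^ 2 := by linarith

theorem exists_nutNet_mem_box {b m : ℕ} (hb : 1 < b) {c : ℕ → ℕ → ℕ}
    (hc : ∀ i, 1 ≤ i → i ≤ m → (c i i).Coprime b) {x₁ y₁ x₂ y₂ : ℝ} (hy₁ : y₁ ≤ 1) (hy₂ : y₂ ≤ 1)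
    {k : ℕ} (hk : k ≤ m) (hL : b ^ k ≤ ⌈y₂ * (b : ℝ) ^ m⌉₊ - ⌈x₂ * (b : ℝ) ^ m⌉₊)
    (hp : 2 * b ^ (m - k) ≤ ⌈y₁ * (b : ℝ) ^ m⌉₊ - ⌈x₁ * (b : ℝ) ^ m⌉₊ + 1) :
    ∃ n < b ^ m, ((n : ℝ) / (b : ℝ) ^ m, nutMap b m c n) ∈ Set.Ico x₁ y₁ ×ˢ Set.Ico x₂ y₂ := by
  have hN : 0 < (b : ℝ) ^ m := by positivity
  have hceil : ∀ y ≤ 1, ⌈y * (b : ℝ) ^ m⌉₊ ≤ b ^ m := fun y hy =>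
    Nat.ceil_le.2 (by push_cast; exact mul_le_of_le_one_left hN.le hy)
  have hceil₁ := hceil y₁ hy₁
  have hceil₂ := hceil y₂ hy₂
  obtain ⟨n, hn₁, hn₂, u, hu, hnu⟩ :=
    exists_nutNumerator_eq_add_mod hb hk hc ⌈x₂ * (b : ℝ) ^ m⌉₊ ⌈x₁ * (b : ℝ) ^ m⌉₊ hp
  refine ⟨n, by omega, div_mem_Ico_of_ceil_le hN hn₁ (by omega), ?_⟩
  rw [nutMap_eq_nutNumerator_div (by omega), hnu, Nat.mod_eq_of_lt (by omega)]
  exact div_mem_Ico_of_ceil_le hN (by omega) (by omega)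

lemma disp_le_of_forall_area_le {P : Set (ℝ × ℝ)} {a : ℝ}
    (h : ∀ x₁ y₁ x₂ y₂ : ℝ, 0 ≤ x₁ → x₁ ≤ y₁ → y₁ ≤ 1 → 0 ≤ x₂ → x₂ ≤ y₂ → y₂ ≤ 1 →
      (∀ p ∈ P, p ∉ Set.Ico x₁ y₁ ×ˢ Set.Ico x₂ y₂) → (y₁ - x₁) * (y₂ - x₂) ≤ a) :
    disp P ≤ a := by
  have ha : 0 ≤ a := by simpa using h 0 0 0 0 le_rfl le_rfl zero_le_one le_rfl le_rfl zero_le_one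
  refine Real.sSup_le ?_ ha
  rintro _ ⟨x₁, y₁, x₂, y₂, h₁, h₂, h₃, h₄, h₅, h₆, h₇, rfl⟩
  exact h x₁ y₁ x₂ y₂ h₁ h₂ h₃ h₄ h₅ h₆ h₇

theorem disp_NUT_le (b m : ℕ) (hb : Nat.Prime b) (hm : 1 ≤ m) (c : ℕ → ℕ → ℕ)
    (hc : ∀ i j, c i j < b) (hdiag : ∀ i, 1 ≤ i → i ≤ m → c i i ≠ 0)
    (P : Set (ℝ × ℝ))
    (hP : P = {p : ℝ × ℝ | ∃ n < b ^ m, p = ((n : ℝ) / (b : ℝ) ^ m, nutMap b m c n)}) :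
    (∀ x₁ y₁ x₂ y₂ : ℝ, 0 ≤ x₁ → x₁ ≤ y₁ → y₁ ≤ 1 → 0 ≤ x₂ → x₂ ≤ y₂ → y₂ ≤ 1 →
      (∀ p ∈ P, p ∉ Set.Ico x₁ y₁ ×ˢ Set.Ico x₂ y₂) →
      (y₁ - x₁) * (y₂ - x₂) ≤ 2 * (b : ℝ) / (b : ℝ) ^ m * (1 - (b : ℝ) / (2 * (b : ℝ) ^ m))) ∧
    disp P ≤ 2 * (b : ℝ) / (b : ℝ) ^ m * (1 - (b : ℝ) / (2 * (b : ℝ) ^ m)) := by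
  have hcop : ∀ i, 1 ≤ i → i ≤ m → (c i i).Coprime b := fun i hi him =>
    Nat.coprime_comm.1 <| hb.coprime_iff_not_dvd.2 <|
      Nat.not_dvd_of_pos_of_lt (Nat.pos_of_ne_zero (hdiag i hi him)) (hc i i)
  refine (fun hbox => ⟨hbox, disp_le_of_forall_area_le hbox⟩) ?_
  intro x₁ y₁ x₂ y₂ hx₁ _ hy₁ hx₂ hxy₂ hy₂ hempty
  have hcols : ∀ k ≤ m, b ^ k ≤ ⌈y₂ * (b : ℝ) ^ m⌉₊ - ⌈x₂ * (b : ℝ) ^ m⌉₊ →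
      ⌈y₁ * (b : ℝ) ^ m⌉₊ - ⌈x₁ * (b : ℝ) ^ m⌉₊ + 2 ≤ 2 * b ^ (m - k) := by
    intro k hk hrows
    by_contra! hcols
    obtain ⟨n, hn, hmem⟩ :=
      exists_nutNet_mem_box (x₁ := x₁) hb.one_lt hcop hy₁ hy₂ hk hrows (by omega)
    exact hempty _ (by rw [hP]; exact ⟨n, hn, rfl⟩) hmem
  exact mul_le_of_mul_pow_le hb.pos (by linarith) (sub_mul_pow_le_min hx₁ hy₁)
    (sub_mul_pow_le_min hx₂ hy₂) (min_mul_min_add_sq_le hb.two_le hm hcols)
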